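/- arXiv:1801.00630 — 3 statements merged into one kernel-verified Lean document; each statement's English description precedes it below -/
import Mathlib

section
/- Let X and Y be pseudometric spaces and f : X → Y a map. Then f is bornologous if and only if *f preserves finite closeness, i.e. for all x, x' : *X, x ∼ x' implies *f x ∼ *f x'. -/
open Filter

/-- The nonstandard extension `*S` of a type `S`, realised as germs along the
hyperfilter on `ℕ` (a nonprincipal ultrafilter). -/
abbrev St (S : Type*) : Type _ := Filter.Germ (↑(Filter.hyperfilter ℕ) : Filter ℕ) S

/-- `*d`, the componentwise lift of the distance to the nonstandard extension. -/
noncomputable def starDist {X : Type*} [PseudoMetricSpace X] (x y : St X) : St ℝ :=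
  Filter.Germ.map₂ dist x y

/-- `x ∼ y` : two points of `*X` are finitely close if `*d x y ≤ *r` for some real `r`. -/
def FinClose {X : Type*} [PseudoMetricSpace X] (x y : St X) : Prop :=
  ∃ r : ℝ, starDist x y ≤ (↑r : St ℝ)

/-- `FIN(X,ξ)` : the points of `*X` finitely close to the base point. -/
def FIN {X : Type*} [PseudoMetricSpace X] (ξ : X) : Set (St X) :=
  {x | FinClose x (↑ξ : St X)}

/-- `INF(X,ξ)` : the infinite points of `*X` relative to the base point. -/
def INF {X : Type*} [PseudoMetricSpace X] (ξ : X) : Set (St X) :=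
  {x | ¬ FinClose x (↑ξ : St X)}

/-- A subset of a pseudometric space is bounded. -/
def BoundedSet {X : Type*} [PseudoMetricSpace X] (B : Set X) : Prop :=
  ∃ r : ℝ, ∀ a ∈ B, ∀ b ∈ B, dist a b ≤ r

/-- A map of pseudometric spaces is bornologous. -/
def Bornologous {X Y : Type*} [PseudoMetricSpace X] [PseudoMetricSpace Y] (f : X → Y) : Prop :=
  ∀ r : ℝ, ∃ s : ℝ, ∀ x x' : X, dist x x' ≤ r → dist (f x) (f x') ≤ s

/-- `f` is proper at the base point `η`: preimages of bounded sets containing `η`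
are bounded. -/
def ProperAt {X Y : Type*} [PseudoMetricSpace X] [PseudoMetricSpace Y]
    (f : X → Y) (η : Y) : Prop :=
  ∀ B : Set Y, η ∈ B → BoundedSet B → BoundedSet (f ⁻¹' B)

/-- `(N, s)` is an internal hyperfinite chain in `B ⊆ *X` from `x` to `y`. -/
def InternalChain {X : Type*} [PseudoMetricSpace X] (B : Set (St X)) (x y : St X)
    (N : ℕ → ℕ) (s : ℕ → ℕ → X) : Prop :=
  (↑(fun n => s n 0) : St X) = x ∧
  (↑(fun n => s n (N n)) : St X) = y ∧
  (∀ g : ℕ → ℕ, (∀ᶠ n in (↑(Filter.hyperfilter ℕ) : Filter ℕ), g n ≤ N n) →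
    (↑(fun n => s n (g n)) : St X) ∈ B) ∧
  (∀ g : ℕ → ℕ, (∀ᶠ n in (↑(Filter.hyperfilter ℕ) : Filter ℕ), g n < N n) →
    FinClose (↑(fun n => s n (g n)) : St X) (↑(fun n => s n (g n + 1)) : St X))

/-- `B ⊆ *X` is macrochain-connected. -/
def MacroChainConnected {X : Type*} [PseudoMetricSpace X] (B : Set (St X)) : Prop :=
  ∀ x ∈ B, ∀ y ∈ B, ∃ N s, InternalChain B x y N s

/-- `x ≡ι y` : `x` and `y` are joined by an internal hyperfinite chain lying in `INF(X,ξ)`. -/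
def IotaEquiv {X : Type*} [PseudoMetricSpace X] (ξ : X) (x y : St X) : Prop :=
  ∃ N s, InternalChain (INF ξ) x y N s

/-- An element of `*ℕ` is infinite. -/
def InfiniteHypernat (i : St ℕ) : Prop := ∀ m : ℕ, ¬ i ≤ (↑m : St ℕ)

/-- A coarse sequence : a bornologous and proper map `ℕ → X`. -/
def CoarseSeq {X : Type*} [PseudoMetricSpace X] (s : ℕ → X) : Prop :=
  (∀ k : ℕ, ∃ r : ℝ, ∀ m n : ℕ, Nat.dist m n ≤ k → dist (s m) (s n) ≤ r) ∧
  (∀ B : Set X, BoundedSet B → (s ⁻¹' B).Finite)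

/-- `s ⊑ t` for coarse sequences : `s` is a subsequence of `t`. -/
def SubCoarse {X : Type*} [PseudoMetricSpace X] (s t : ℕ → X) : Prop :=
  CoarseSeq s ∧ CoarseSeq t ∧ ∃ κ : ℕ → ℕ, StrictMono κ ∧ s = t ∘ κ

/-- `s ≡σ t` : the equivalence relation generated by `⊑` on coarse sequences. -/
def SigmaEquiv {X : Type*} [PseudoMetricSpace X] (s t : ℕ → X) : Prop :=
  Relation.EqvGen SubCoarse s t

/-- `(X, ξ)` is non-scattering at infinity. -/
def NonScattering {X : Type*} [PseudoMetricSpace X] (ξ : X) : Prop :=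
  ∃ r : ℝ, ∀ A : Set X, ξ ∈ A → BoundedSet A →
    ∀ x ∈ Aᶜ, ∀ y ∈ Aᶜ, ∃ n : ℕ, ∃ c : ℕ → X, c 0 = x ∧ c n = y ∧
      (∀ i ≤ n, c i ∈ Aᶜ) ∧ (∀ i < n, dist (c i) (c (i + 1)) ≤ r)

/-! The forward direction is pointwise along the ultrafilter. Conversely, a failure of bornology
yields pairs at distance `≤ r` whose images are more than `n` apart; as the hyperfilter refines
the cofinite filter, the germs of these pairs are finitely close but their images are not. -/

section

variable {X Y : Type*} [PseudoMetricSpace X] [PseudoMetricSpace Y]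

theorem finClose_coe_iff {u v : ℕ → X} :
    FinClose (u : St X) (v : St X) ↔
      ∃ r : ℝ, ∀ᶠ n in (hyperfilter ℕ : Filter ℕ), dist (u n) (v n) ≤ r :=
  Iff.rfl

theorem Bornologous.finClose_map {f : X → Y} (hf : Bornologous f) {x x' : St X}
    (h : FinClose x x') : FinClose (x.map f) (x'.map f) := by
  induction x using Germ.inductionOn
  induction x' using Germ.inductionOn
  obtain ⟨r, hr⟩ := finClose_coe_iff.1 h
  obtain ⟨s, hs⟩ := hf r
  exact finClose_coe_iff.2 ⟨s, hr.mono fun n hn => hs _ _ hn⟩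

theorem not_finClose_of_tendsto_dist_atTop {u v : ℕ → X}
    (h : Tendsto (fun n => dist (u n) (v n)) atTop atTop) : ¬ FinClose (u : St X) (v : St X) := by
  rintro ⟨r, hr⟩
  have hU : Tendsto (fun n => dist (u n) (v n)) (hyperfilter ℕ) atTop :=
    h.mono_left (hyperfilter_le_cofinite.trans Nat.cofinite_eq_atTop.le)
  obtain ⟨n, hle, hgt⟩ := (hr.and (hU.eventually_gt_atTop r)).exists
  exact hgt.not_ge hle

theorem exists_seq_dist_le_tendsto_dist_map_of_not_bornologous {f : X → Y}
    (hf : ¬ Bornologous f) :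
    ∃ (r : ℝ) (u v : ℕ → X), (∀ n, dist (u n) (v n) ≤ r) ∧
      Tendsto (fun n => dist (f (u n)) (f (v n))) atTop atTop := by
  simp only [Bornologous, not_forall, not_exists, not_le] at hf
  obtain ⟨r, hr⟩ := hf
  choose u v hd hfd using fun n : ℕ => hr n
  exact ⟨r, u, v, hd, tendsto_atTop_mono (fun n => (hfd n).le) tendsto_natCast_atTop_atTop⟩

end

/-- A map between pseudometric spaces is bornologous iff its nonstandard extension
preserves finite closeness. -/
theorem bornologous_iff_map_finClose {X Y : Type*} [PseudoMetricSpace X] [PseudoMetricSpace Y]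
    (f : X → Y) :
    Bornologous f ↔
      ∀ x x' : St X, FinClose x x' → FinClose (x.map f) (x'.map f) := by
  refine ⟨fun hf _ _ => hf.finClose_map, fun h => by_contra fun hf => ?_⟩
  obtain ⟨r, u, v, hd, hfd⟩ := exists_seq_dist_le_tendsto_dist_map_of_not_bornologous hf
  exact not_finClose_of_tendsto_dist_atTop hfd
    (h u v (finClose_coe_iff.2 ⟨r, .of_forall hd⟩))
end

section
/- Consider X = ℝ with its usual metric and base point 0, so that *ℝ is Mathlib's Hyperreal and INF(ℝ,0) is exactly the set of infinite hyperreals. For any two infinite hyperreals x and y, x ≡ι y if and only if x and y have the same sign (0 < x ↔ 0 < y). Consequently INF(ℝ,0) has exactly two macrochain-connected components, i.e. ι(ℝ) = {+∞, −∞}. -/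
open Filter

/-!
A chain in `INF(ℝ,0)` starting at a positive point and ending at a nonpositive one has, at
almost every level `n`, a first index where it leaves the positive half-line. The germ of the
point just before it is positive and infinite, the germ of the point just after it is
nonpositive, and two such hyperreals are never finitely close. Conversely, two infinite
hyperreals of the same sign are joined by the componentwise straight segment, cut into
`⌈|b n - a n|⌉₊ + 1` steps of length at most `1`; every point of it lies between the
endpoints and is therefore infinite of the same sign.
-/

open Filter Germ Set

theorem Nat.exists_lt_and_not_succ {P : ℕ → Prop} {N : ℕ} (h0 : P 0) (hN : ¬P N) :
    ∃ i < N, P i ∧ ¬P (i + 1) := by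
  induction N with
  | zero => exact absurd h0 hN
  | succ N ih =>
    by_cases hPN : P N
    · exact ⟨N, N.lt_succ_self, hPN, hN⟩
    · obtain ⟨i, hi, hPi⟩ := ih hPN
      exact ⟨i, hi.trans N.lt_succ_self, hPi⟩

theorem Filter.Germ.coe_mem_uIcc {α β : Type*} [LinearOrder β] {l : Ultrafilter α}
    {a b c : α → β} (h : ∀ᶠ n in (l : Filter α), c n ∈ uIcc (a n) (b n)) :
    (c : Germ (l : Filter α) β) ∈ uIcc (a : Germ (l : Filter α) β) b :=
  ⟨coe_le.2 (h.mono fun _ hn => hn.1), coe_le.2 (h.mono fun _ hn => hn.2)⟩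

section PseudoMetric

variable {X : Type*} [PseudoMetricSpace X]

theorem starDist_comm (x y : St X) : starDist x y = starDist y x :=
  inductionOn₂ x y fun f g => congrArg ofFun (funext fun n => dist_comm (f n) (g n))

theorem FinClose.symm {x y : St X} (h : FinClose x y) : FinClose y x := by
  rwa [FinClose, starDist_comm]

theorem InternalChain.reverse {B : Set (St X)} {x y : St X} {N : ℕ → ℕ} {s : ℕ → ℕ → X}
    (h : InternalChain B x y N s) : InternalChain B y x N (fun n i => s n (N n - i)) := by
  obtain ⟨h0, h1, hmem, hstep⟩ := h
  refine ⟨by simpa using h1, by simpa using h0,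
    fun g _ => hmem (fun n => N n - g n) (Eventually.of_forall fun n => (N n).sub_le _),
    fun g hg => ?_⟩
  have hback : (↑(fun n => s n (N n - (g n + 1) + 1)) : St X) = ↑(fun n => s n (N n - g n)) :=
    coe_eq.2 (hg.mono fun n hn => by simp only; congr 1; omega)
  simpa only [hback] using
    (hstep (fun n => N n - (g n + 1)) (hg.mono fun n hn => by omega)).symm

noncomputable def segmentChainLength (a b : X) : ℕ := ⌈dist a b⌉₊ + 1

theorem segmentChainLength_pos (a b : X) : (0 : ℝ) < segmentChainLength a b := by
  unfold segmentChainLength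
  positivity

theorem dist_le_segmentChainLength (a b : X) : dist a b ≤ segmentChainLength a b := by
  calc dist a b ≤ ⌈dist a b⌉₊ := Nat.le_ceil _
    _ ≤ segmentChainLength a b := by simp [segmentChainLength]

end PseudoMetric

section SegmentChain

variable {E : Type*} [SeminormedAddCommGroup E] [NormedSpace ℝ E]

noncomputable def segmentChain (a b : E) (i : ℕ) : E :=
  AffineMap.lineMap a b ((i : ℝ) / segmentChainLength a b)

@[simp] theorem segmentChain_zero (a b : E) : segmentChain a b 0 = a := by
  simp [segmentChain]

@[simp] theorem segmentChain_length (a b : E) :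
    segmentChain a b (segmentChainLength a b) = b := by
  simp [segmentChain, (segmentChainLength_pos a b).ne']

theorem dist_segmentChain_succ_le (a b : E) (i : ℕ) :
    dist (segmentChain a b i) (segmentChain a b (i + 1)) ≤ 1 := by
  have hN := segmentChainLength_pos a b
  rw [segmentChain, segmentChain, dist_lineMap_lineMap, Real.dist_eq, Nat.cast_succ, ← sub_div,
    abs_div, abs_of_pos hN, sub_add_cancel_left, abs_neg, abs_one, one_div_mul_eq_div,
    div_le_one hN]
  exact dist_le_segmentChainLength a b

theorem segmentChain_mem_segment {a b : E} {i : ℕ} (hi : i ≤ segmentChainLength a b) :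
    segmentChain a b i ∈ segment ℝ a b := by
  rw [segment_eq_image_lineMap]
  exact ⟨_, ⟨by positivity, div_le_one_of_le₀ (by exact_mod_cast hi) (by positivity)⟩, rfl⟩

theorem internalChain_segmentChain {B : Set (St E)} (a b : ℕ → E)
    (hB : ∀ c : ℕ → E, (∀ᶠ n in (hyperfilter ℕ : Filter ℕ), c n ∈ segment ℝ (a n) (b n)) →
      (c : St E) ∈ B) :
    InternalChain B a b (fun n => segmentChainLength (a n) (b n))
      (fun n => segmentChain (a n) (b n)) :=
  ⟨by simp, by simp, fun _ hg => hB _ (hg.mono fun _ hn => segmentChain_mem_segment hn),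
    fun _ _ => ⟨1, coe_le.2 (Eventually.of_forall fun _ => dist_segmentChain_succ_le _ _ _)⟩⟩

end SegmentChain

section RealLine

theorem starDist_eq_abs_sub (x y : St ℝ) : starDist x y = |x - y| :=
  inductionOn₂ x y fun _ _ => rfl

theorem finClose_iff_abs_sub_le {x y : St ℝ} : FinClose x y ↔ ∃ r : ℝ, |x - y| ≤ r := by
  rw [FinClose, starDist_eq_abs_sub]

theorem mem_INF_zero_iff {x : St ℝ} : x ∈ INF (0 : ℝ) ↔ ∀ r : ℝ, (r : St ℝ) < |x| := by
  change ¬FinClose x 0 ↔ _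
  simp only [finClose_iff_abs_sub_le, sub_zero, not_exists, not_le]

theorem mem_INF_zero_of_abs_le {x z : St ℝ} (hx : x ∈ INF (0 : ℝ)) (hxz : |x| ≤ |z|) :
    z ∈ INF (0 : ℝ) :=
  mem_INF_zero_iff.2 fun r => (mem_INF_zero_iff.1 hx r).trans_le hxz

theorem not_finClose_of_mem_INF_zero {x y : St ℝ} (hx : x ∈ INF (0 : ℝ)) (hx0 : 0 < x)
    (hy : y ≤ 0) : ¬FinClose x y := by
  rw [finClose_iff_abs_sub_le]
  rintro ⟨r, hr⟩
  have hxy : |x| ≤ |x - y| := abs_le_abs_of_nonneg hx0.le (by linarith)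
  exact (mem_INF_zero_iff.1 hx r).not_ge (hxy.trans hr)

theorem InternalChain.pos_of_pos {x y : St ℝ} {N : ℕ → ℕ} {s : ℕ → ℕ → ℝ}
    (h : InternalChain (INF (0 : ℝ)) x y N s) (hx : 0 < x) : 0 < y := by
  obtain ⟨rfl, rfl, hmem, hstep⟩ := h
  by_contra hy
  have hexit : ∀ n, ∃ i, 0 < s n 0 → ¬0 < s n (N n) →
      i < N n ∧ 0 < s n i ∧ ¬0 < s n (i + 1) := fun n => by
    by_cases hn : 0 < s n 0 ∧ ¬0 < s n (N n)
    · obtain ⟨i, hi⟩ := Nat.exists_lt_and_not_succ (P := fun i => 0 < s n i) hn.1 hn.2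
      exact ⟨i, fun _ _ => hi⟩
    · exact ⟨0, fun h0 hN => absurd ⟨h0, hN⟩ hn⟩
  choose g hg using hexit
  have hcross : ∀ᶠ n in (hyperfilter ℕ : Filter ℕ),
      g n < N n ∧ 0 < s n (g n) ∧ ¬0 < s n (g n + 1) :=
    ((coe_lt.1 hx).and (coe_le.1 (not_lt.1 hy))).mono fun n hn => hg n hn.1 hn.2.not_gt
  exact not_finClose_of_mem_INF_zero (hmem g (hcross.mono fun _ hn => hn.1.le))
    (coe_lt.2 (hcross.mono fun _ hn => hn.2.1))
    (coe_le.2 (hcross.mono fun _ hn => not_lt.1 hn.2.2))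
    (hstep g (hcross.mono fun _ hn => hn.1))

theorem mem_INF_zero_of_mem_Icc {x y z : St ℝ} (hx : x ∈ INF (0 : ℝ)) (hy : y ∈ INF (0 : ℝ))
    (hxy : 0 < x ↔ 0 < y) (hz : z ∈ Icc x y) : z ∈ INF (0 : ℝ) := by
  by_cases hx0 : 0 < x
  · exact mem_INF_zero_of_abs_le hx (abs_le_abs_of_nonneg hx0.le hz.1)
  · exact mem_INF_zero_of_abs_le hy (abs_le_abs_of_nonpos (not_lt.1 (hxy.not.1 hx0)) hz.2)

theorem mem_INF_zero_of_mem_uIcc {x y z : St ℝ} (hx : x ∈ INF (0 : ℝ)) (hy : y ∈ INF (0 : ℝ))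
    (hxy : 0 < x ↔ 0 < y) (hz : z ∈ uIcc x y) : z ∈ INF (0 : ℝ) := by
  rcases le_total x y with hle | hle
  · exact mem_INF_zero_of_mem_Icc hx hy hxy (uIcc_of_le hle ▸ hz)
  · exact mem_INF_zero_of_mem_Icc hy hx hxy.symm (uIcc_of_ge hle ▸ hz)

theorem iotaEquiv_zero_of_pos_iff {x y : St ℝ} (hx : x ∈ INF (0 : ℝ)) (hy : y ∈ INF (0 : ℝ))
    (hxy : 0 < x ↔ 0 < y) : IotaEquiv (0 : ℝ) x y := by
  induction x using Germ.inductionOn with | h a =>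
  induction y using Germ.inductionOn with | h b =>
  exact ⟨_, _, internalChain_segmentChain a b fun c hc => mem_INF_zero_of_mem_uIcc hx hy hxy
    (coe_mem_uIcc (hc.mono fun n hn => segment_eq_uIcc (a n) (b n) ▸ hn))⟩

theorem omega_mem_INF_zero : (Hyperreal.omega : St ℝ) ∈ INF (0 : ℝ) :=
  mem_INF_zero_iff.2 fun r => (Hyperreal.coe_lt_omega r).trans_eq Hyperreal.abs_omega.symm

end RealLine

/-- For the real line with base point `0`, two infinite hyperreals are `≡ι`-related iff
they have the same sign; and both signs occur, so `INF(ℝ,0)` has exactly two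
macrochain-connected components, `ι(ℝ) = {+∞, -∞}`. -/
theorem iota_real_line :
    (∀ x y : St ℝ, x ∈ INF (0 : ℝ) → y ∈ INF (0 : ℝ) →
      (IotaEquiv (0 : ℝ) x y ↔ (0 < x ↔ 0 < y))) ∧
    (∃ x ∈ INF (0 : ℝ), 0 < x) ∧ (∃ y ∈ INF (0 : ℝ), y < 0) :=
  ⟨fun _ _ hx hy => ⟨fun ⟨_, _, h⟩ => ⟨h.pos_of_pos, h.reverse.pos_of_pos⟩,
      iotaEquiv_zero_of_pos_iff hx hy⟩,
    ⟨_, omega_mem_INF_zero, Hyperreal.omega_pos⟩,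
    ⟨_, mem_INF_zero_of_abs_le omega_mem_INF_zero (abs_neg _).ge,
      neg_neg_iff_pos.2 Hyperreal.omega_pos⟩⟩
end

section
/- (The vase.) Let V := {p : ℝ × ℝ | (p.1 = 1 ∨ p.1 = −1) ∧ 1 ≤ p.2} ∪ {p : ℝ × ℝ | −1 ≤ p.1 ∧ p.1 ≤ 1 ∧ p.2 = 1}, regarded as a metric space with the metric inherited from ℝ × ℝ (max metric), with base point (1,1). Then any two points x, y ∈ INF(V, (1,1)) satisfy x ≡ι y; that is, ι(V) is a singleton. -/
open Filter

/-- The vase. -/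
def Vase : Set (ℝ × ℝ) :=
  {p | (p.1 = 1 ∨ p.1 = -1) ∧ 1 ≤ p.2} ∪ {p | -1 ≤ p.1 ∧ p.1 ≤ 1 ∧ p.2 = 1}

-- auxiliary
lemma finClose_coe {X : Type*} [PseudoMetricSpace X] (f g : ℕ → X) :
    FinClose (↑f : St X) ↑g ↔ ∃ r : ℝ, ∀ᶠ n in (↑(hyperfilter ℕ) : Filter ℕ), dist (f n) (g n) ≤ r := by
  simp [FinClose, starDist, Filter.Germ.map₂_coe, ← Filter.Germ.coe_le]
  rfl

lemma finClose_coe_const {X : Type*} [PseudoMetricSpace X] (f : ℕ → X) (ξ : X) :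
    FinClose (↑f : St X) ↑ξ ↔ ∃ r : ℝ, ∀ᶠ n in (↑(hyperfilter ℕ) : Filter ℕ), dist (f n) ξ ≤ r :=
  finClose_coe f (fun _ => ξ)

namespace VaseAux

lemma mem_ray {α h : ℝ} (hα : α = 1 ∨ α = -1) (hh : 1 ≤ h) : ((α, h) : ℝ × ℝ) ∈ Vase :=
  Or.inl ⟨hα, hh⟩

lemma bounds {p : ℝ × ℝ} (hp : p ∈ Vase) : -1 ≤ p.1 ∧ p.1 ≤ 1 ∧ 1 ≤ p.2 := by
  rcases hp with ⟨h1, h2⟩ | ⟨h1, h2, h3⟩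
  · rcases h1 with h | h <;> rw [h] <;> norm_num <;> exact h2
  · exact ⟨h1, h2, h3.ge⟩

lemma ray_of {p : ℝ × ℝ} (hp : p ∈ Vase) (h : 1 < p.2) : p.1 = 1 ∨ p.1 = -1 := by
  rcases hp with ⟨h1, _⟩ | ⟨_, _, h3⟩
  · exact h1
  · rw [h3] at h; linarith

lemma dist_eq (p q : Vase) :
    dist p q = max |(p : ℝ × ℝ).1 - (q : ℝ × ℝ).1| |(p : ℝ × ℝ).2 - (q : ℝ × ℝ).2| := by
  rw [Subtype.dist_eq, Prod.dist_eq, Real.dist_eq, Real.dist_eq]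

noncomputable def T (a : ℕ → Vase) (n : ℕ) : ℝ := (a n : ℝ × ℝ).2

noncomputable def M (a b : ℕ → Vase) (n : ℕ) : ℕ := ⌈T a n⌉₊ + ⌈T b n⌉₊

open Classical in
noncomputable def Nn (a b : ℕ → Vase) (n : ℕ) : ℕ :=
  if 1 < T a n ∧ 1 < T b n then (M a b n + 1) + (⌈T a n⌉₊ + M a b n) else 0

open Classical in
noncomputable def S (a b : ℕ → Vase) (n k : ℕ) : Vase :=
  if h : 1 < T a n ∧ 1 < T b n then
    if k ≤ M a b n then
      ⟨((a n : ℝ × ℝ).1, T a n + k),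
        mem_ray (ray_of (a n).2 h.1) (by have := h.1; have : (0:ℝ) ≤ k := Nat.cast_nonneg k; linarith)⟩
    else
      ⟨((b n : ℝ × ℝ).1, max (T b n) (T a n + (M a b n : ℝ) - ((k - (M a b n + 1) : ℕ) : ℝ))),
        mem_ray (ray_of (b n).2 h.2) (le_trans h.2.le (le_max_left _ _))⟩
  else a n

variable {a b : ℕ → Vase} {n : ℕ}

lemma S_phase1 (hn : 1 < T a n ∧ 1 < T b n) {k : ℕ} (hk : k ≤ M a b n) :
    (S a b n k : ℝ × ℝ) = ((a n : ℝ × ℝ).1, T a n + k) := by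
  rw [S, dif_pos hn, if_pos hk]

lemma S_phase2 (hn : 1 < T a n ∧ 1 < T b n) (j : ℕ) :
    (S a b n (M a b n + 1 + j) : ℝ × ℝ)
      = ((b n : ℝ × ℝ).1, max (T b n) (T a n + (M a b n : ℝ) - (j : ℝ))) := by
  rw [S, dif_pos hn, if_neg (by omega)]
  show (_, _) = _
  have h1 : M a b n + 1 + j - (M a b n + 1) = j := by omega
  rw [h1]

lemma S_zero (hn : 1 < T a n ∧ 1 < T b n) : S a b n 0 = a n := by
  apply Subtype.ext
  rw [S_phase1 hn (Nat.zero_le _)]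
  simp [T, Prod.ext_iff]

lemma S_last (hn : 1 < T a n ∧ 1 < T b n) : S a b n (Nn a b n) = b n := by
  apply Subtype.ext
  rw [Nn, if_pos hn, S_phase2 hn (⌈T a n⌉₊ + M a b n)]
  have h2 : max (T b n) (T a n + (M a b n : ℝ) - ((⌈T a n⌉₊ + M a b n : ℕ) : ℝ)) = T b n := by
    apply max_eq_left
    have := Nat.le_ceil (T a n)
    push_cast
    linarith
  rw [h2]
  simp [T, Prod.ext_iff]

lemma S_snd_ge (hn : 1 < T a n ∧ 1 < T b n) (k : ℕ) :
    min (T a n) (T b n) ≤ (S a b n k : ℝ × ℝ).2 := by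
  rw [S, dif_pos hn]
  split
  · have : (0:ℝ) ≤ k := Nat.cast_nonneg k
    simp only []
    exact le_trans (min_le_left _ _) (by linarith)
  · exact le_trans (min_le_right _ _) (le_max_left _ _)

lemma S_step (hn : 1 < T a n ∧ 1 < T b n) {k : ℕ} (hk : k < Nn a b n) :
    dist (S a b n k) (S a b n (k + 1)) ≤ 2 := by
  have hub : T b n ≤ (⌈T b n⌉₊ : ℝ) := Nat.le_ceil _
  have hMb : ((⌈T b n⌉₊ : ℕ) : ℝ) ≤ (M a b n : ℝ) := by
    rw [M]; push_cast; have : (0:ℝ) ≤ (⌈T a n⌉₊ : ℝ) := Nat.cast_nonneg _; linarith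
  rcases lt_trichotomy k (M a b n) with hc | hc | hc
  · -- phase 1 step
    rw [dist_eq, S_phase1 hn hc.le, S_phase1 hn (by omega : k + 1 ≤ M a b n)]
    simp only
    rw [sub_self, abs_zero]
    apply max_le (by norm_num)
    have : T a n + (k:ℝ) - (T a n + ((k+1 : ℕ):ℝ)) = -1 := by push_cast; ring
    rw [this]; norm_num
  · -- crossing step
    subst hc
    have hp2 := S_phase2 (a := a) (b := b) (n := n) hn 0
    norm_num at hp2
    rw [dist_eq, S_phase1 hn le_rfl, hp2]
    simp only
    have hmax : max (T b n) (T a n + (M a b n : ℝ)) = T a n + (M a b n : ℝ) := by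
      apply max_eq_right; linarith [hn.1]
    rw [hmax, sub_self, abs_zero]
    apply max_le _ (by norm_num)
    have hA := bounds (a n).2
    have hB := bounds (b n).2
    rw [abs_le]; constructor <;> linarith [hA.1, hA.2.1, hB.1, hB.2.1]
  · -- phase 2 step
    obtain ⟨j, rfl⟩ : ∃ j, k = (M a b n + 1) + j := ⟨k - (M a b n + 1), by omega⟩
    have hidx : M a b n + 1 + j + 1 = M a b n + 1 + (j + 1) := by omega
    rw [dist_eq, hidx, S_phase2 hn j, S_phase2 hn (j + 1)]
    simp only
    rw [sub_self, abs_zero]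
    apply max_le (by norm_num)
    rw [max_comm (T b n), max_comm (T b n)]
    refine le_trans (abs_max_sub_max_le_abs _ _ _) ?_
    have : T a n + (M a b n : ℝ) - ((j:ℕ):ℝ) - (T a n + (M a b n : ℝ) - ((j+1 : ℕ):ℝ)) = 1 := by
      push_cast; ring
    rw [this]; norm_num

end VaseAux

open VaseAux in
lemma vase_main (ξ : Vase) (hξ : (ξ : ℝ × ℝ) = (1, 1)) (a b : ℕ → Vase)
    (ha : (↑a : St Vase) ∈ INF ξ) (hb : (↑b : St Vase) ∈ INF ξ) :
    IotaEquiv ξ (↑a) (↑b) := by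
  have key : ∀ (c : ℕ → Vase), (↑c : St Vase) ∈ INF ξ → ∀ᶠ n in (↑(hyperfilter ℕ) : Filter ℕ), 1 < T c n := by
    intro c hc
    have h2 : ¬ ∀ᶠ n in (↑(hyperfilter ℕ) : Filter ℕ), dist (c n) ξ ≤ 2 :=
      fun h => hc ((finClose_coe_const _ _).mpr ⟨2, h⟩)
    have h3 := Ultrafilter.eventually_not.mpr h2
    filter_upwards [h3] with n hn
    push_neg at hn
    have hB := bounds (c n).2
    rw [dist_eq, hξ, show ((1:ℝ),(1:ℝ)).1 = 1 from rfl, show ((1:ℝ),(1:ℝ)).2 = 1 from rfl] at hn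
    have h4 : |(c n : ℝ × ℝ).1 - 1| ≤ 2 := by rw [abs_le]; constructor <;> linarith [hB.1, hB.2.1]
    have h5 : 2 < |(c n : ℝ × ℝ).2 - 1| := by
      rcases max_cases |(c n : ℝ × ℝ).1 - 1| |(c n : ℝ × ℝ).2 - 1| with ⟨he, _⟩ | ⟨he, _⟩ <;>
        rw [he] at hn <;> linarith
    rw [abs_of_nonneg (by linarith [hB.2.2])] at h5
    simp only [T]; linarith
  have hG : ∀ᶠ n in (↑(hyperfilter ℕ) : Filter ℕ), 1 < T a n ∧ 1 < T b n :=
    (key a ha).and (key b hb)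
  refine ⟨Nn a b, S a b, ?_, ?_, ?_, ?_⟩
  · refine Filter.Germ.coe_eq.mpr ?_
    filter_upwards [hG] with n hn using S_zero hn
  · refine Filter.Germ.coe_eq.mpr ?_
    filter_upwards [hG] with n hn using S_last hn
  · intro g _
    simp only [INF, Set.mem_setOf_eq]
    intro hfc
    obtain ⟨r, hr⟩ := (finClose_coe_const _ _).mp hfc
    have hmin : ∀ᶠ n in (↑(hyperfilter ℕ) : Filter ℕ), T a n ≤ r + 1 ∨ T b n ≤ r + 1 := by
      filter_upwards [hG, hr] with n hn hrn
      have h1 := S_snd_ge (a := a) (b := b) hn (g n)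
      rw [dist_eq, hξ, show ((1:ℝ),(1:ℝ)).1 = 1 from rfl, show ((1:ℝ),(1:ℝ)).2 = 1 from rfl] at hrn
      have h2 : |(S a b n (g n) : ℝ × ℝ).2 - 1| ≤ r := le_trans (le_max_right _ _) hrn
      have h3 := (abs_le.mp h2).2
      have : min (T a n) (T b n) ≤ r + 1 := by linarith
      exact min_le_iff.mp this
    have final : ∀ (c : ℕ → Vase), (∀ᶠ n in (↑(hyperfilter ℕ) : Filter ℕ), T c n ≤ r + 1) →
        FinClose (↑c : St Vase) ↑ξ := by
      intro c hc
      refine (finClose_coe_const _ _).mpr ⟨max 2 r, ?_⟩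
      filter_upwards [hc] with n hn
      have hB := bounds (c n).2
      rw [dist_eq, hξ, show ((1:ℝ),(1:ℝ)).1 = 1 from rfl, show ((1:ℝ),(1:ℝ)).2 = 1 from rfl]
      apply max_le
      · refine le_trans ?_ (le_max_left 2 r)
        rw [abs_le]; constructor <;> linarith [hB.1, hB.2.1]
      · refine le_trans ?_ (le_max_right 2 r)
        rw [abs_of_nonneg (by linarith [hB.2.2])]
        simp only [T] at hn; linarith
    rcases Ultrafilter.eventually_or.mp hmin with h | h
    · exact ha (final a h)
    · exact hb (final b h)
  · intro g hg
    refine (finClose_coe _ _).mpr ⟨2, ?_⟩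
    filter_upwards [hG, hg] with n hn hgn using S_step hn hgn

/-- For the vase with base point `(1,1)`, any two infinite points are `≡ι`-related,
so `ι(V)` is a singleton. -/
theorem iota_vase (ξ : Vase) (hξ : (ξ : ℝ × ℝ) = (1, 1)) :
    ∀ x ∈ INF ξ, ∀ y ∈ INF ξ, IotaEquiv ξ x y := by
  intro x hx y hy
  revert hx hy
  refine Filter.Germ.inductionOn₂ (p := fun x y => x ∈ INF ξ → y ∈ INF ξ → IotaEquiv ξ x y) x y ?_
  intro a b ha hb
  exact vase_main ξ hξ a b ha hb
end
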